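/- (Contour-splitting lemma) Let R be a rational function with all poles inside a contour Γ, let z be a point outside Γ which is not a pole of R, and let S(u_1,...,u_ℓ) be a symmetric polynomial. Then (∏_{α=1}^{ℓ} ∮_{Γ∪z} du_α R(u_α)/(2πi (u_α - z))) Δ_ℓ²(u) S(u) − (∏_{α=1}^{ℓ} ∮_{Γ} du_α R(u_α)/(2πi (u_α - z))) Δ_ℓ²(u) S(u) = ℓ · R(z) · (∏_{α=1}^{ℓ-1} ∮_{Γ} du_α R(u_α)(u_α - z)/(2πi)) Δ_{ℓ-1}²(u_1,...,u_{ℓ-1}) S(z, u_1, ..., u_{ℓ-1}). -/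

import Mathlib

/-!
Expand `Δ²S = ∑_t a_t u^t` into monomials. Since the remaining integrand `∏ R(u_α)/(u_α - z)`
factorises over the variables, the iterated integral equals `∑_t a_t ∏_α M(t_α)`, with one-variable
moments `M(k) = (2πi)⁻¹ ∮ w^k R(w)/(w - z) dw` (`momentEval`). Enlarging `Γ` to `Γ ∪ z` adds the
residue `R(z) z^k` to each `M(k)`. Expand `∏_α (M + R(z) z^·)` over the sets of variables that take
the residue. A term in which two variables `u_i, u_j` take the geometric weight `z^·` vanishes:
`u_i - u_j` divides `Δ²`, and multiplying the argument by `u_i` or by `u_j` multiplies the value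
by the same factor `z`. By symmetry the `ℓ` terms with a single residue agree. That residue may be put at `u_1`, and
this term is the substitution `u_1 = z`, which `Δ_ℓ²(z, u) = ∏_α (z - u_α)² Δ_{ℓ-1}²(u)` turns into
the right-hand side.
-/

open Complex

/-- The `m`-fold iterated contour integral `∏_α ∮_{C(c,ρ)} du_α/(2πi)` of a function of
`m` complex variables. -/
noncomputable def iterCircle (c : ℂ) (ρ : ℝ) : (m : ℕ) → ((Fin m → ℂ) → ℂ) → ℂ
  | 0, g => g ![]
  | m + 1, g =>
      (2 * Real.pi * Complex.I)⁻¹ *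
        ∮ u in C(c, ρ), iterCircle c ρ m fun v => g (Fin.cons u v)

open MvPolynomial Finset Matrix Metric

section Vandermonde

variable {K : Type*} [CommRing K]

theorem prod_Ioi_sub_cons {n : ℕ} (x : K) (v : Fin n → K) :
    ∏ i, ∏ j ∈ Ioi i, ((Fin.cons x v : Fin (n + 1) → K) i - (Fin.cons x v : Fin (n + 1) → K) j) =
      (∏ a, (x - v a)) * ∏ i, ∏ j ∈ Ioi i, (v i - v j) := by
  rw [Fin.prod_univ_succ, Fin.prod_Ioi_zero]
  simp only [Fin.prod_Ioi_succ, Fin.cons_zero, Fin.cons_succ]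

theorem sub_dvd_det_vandermonde {n : ℕ} (f : Fin n → K) {i j : Fin n} (hij : i ≠ j) :
    f i - f j ∣ (vandermonde f).det := by
  wlog hlt : i < j generalizing i j
  · rw [← neg_sub, neg_dvd]
    exact this hij.symm (lt_of_le_of_ne (not_lt.mp hlt) hij.symm)
  rw [det_vandermonde, ← neg_sub, neg_dvd]
  exact (dvd_prod_of_mem _ (mem_Ioi.mpr hlt)).trans
    (dvd_prod_of_mem (fun i => ∏ j ∈ Ioi i, (f j - f i)) (mem_univ i))

theorem eval_det_vandermonde_X_sq {n : ℕ} (u : Fin n → K) :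
    eval u ((vandermonde (X : Fin n → MvPolynomial (Fin n) K)).det ^ 2) =
      (∏ i, ∏ j ∈ Ioi i, (u i - u j)) ^ 2 := by
  have hmap : (eval u).mapMatrix (vandermonde (X : Fin n → MvPolynomial (Fin n) K)) =
      vandermonde u := by
    ext i j
    simp [vandermonde_apply]
  rw [map_pow, RingHom.map_det, hmap, det_vandermonde, ← prod_pow, ← prod_pow]
  refine prod_congr rfl fun i _ => ?_
  rw [← prod_pow, ← prod_pow]
  exact prod_congr rfl fun j _ => by ring

theorem isSymmetric_det_vandermonde_X_sq (n : ℕ) :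
    ((vandermonde (X : Fin n → MvPolynomial (Fin n) K)).det ^ 2).IsSymmetric := by
  intro e
  have hperm : (rename e : MvPolynomial (Fin n) K →ₐ[K] _).mapMatrix (vandermonde X) =
      (vandermonde X).submatrix e id := by
    ext i j
    simp [vandermonde_apply]
  rw [map_pow, AlgHom.map_det, hperm, det_permute, mul_pow, ← Int.cast_pow,
    ← Units.val_pow_eq_pow_val, Int.units_sq, Units.val_one, Int.cast_one, one_mul]

end Vandermonde

section momentEval

variable {K : Type*} [CommRing K] {σ τ : Type*} [Fintype σ] [Fintype τ]

/-- The expectation of polynomials in independent variables, the `a`-th of which has the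
moment sequence `W a`: the monomial `∏ X a ^ t a` is sent to `∏ W a (t a)`. -/
noncomputable def momentEval (W : σ → ℕ → K) : MvPolynomial σ K →ₗ[K] K :=
  (basisMonomials σ K).constr K fun t => ∏ a, W a (t a)

variable (W : σ → ℕ → K)

theorem momentEval_monomial (t : σ →₀ ℕ) (c : K) :
    momentEval W (monomial t c) = c * ∏ a, W a (t a) := by
  have hbasis := (basisMonomials σ K).constr_basis K (fun t => ∏ a, W a (t a)) t
  rw [coe_basisMonomials] at hbasis
  rw [← smul_eq_mul, ← hbasis, ← map_smul, smul_monomial, smul_eq_mul, mul_one, momentEval]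

theorem momentEval_apply (Q : MvPolynomial σ K) :
    momentEval W Q = ∑ t ∈ Q.support, coeff t Q * ∏ a, W a (t a) := by
  conv_lhs => rw [Q.as_sum]
  simp only [map_sum, momentEval_monomial]

theorem momentEval_X_mul [DecidableEq σ] {i : σ} {z : K} (hW : ∀ k, W i (k + 1) = z * W i k)
    (Q : MvPolynomial σ K) : momentEval W (X i * Q) = z * momentEval W Q := by
  induction Q using MvPolynomial.induction_on' with
  | monomial t c =>
    rw [X, monomial_mul, one_mul, momentEval_monomial, momentEval_monomial,
      Fintype.prod_eq_mul_prod_compl i, Fintype.prod_eq_mul_prod_compl i]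
    have hcompl : ∀ b ∈ ({i}ᶜ : Finset σ),
        W b ((Finsupp.single i 1 + t : σ →₀ ℕ) b) = W b (t b) := fun b hb => by
      rw [Finsupp.add_apply, Finsupp.single_eq_of_ne (by simpa using hb), zero_add]
    rw [prod_congr rfl hcompl, Finsupp.add_apply, Finsupp.single_eq_same, add_comm, hW]
    ring
  | add p q hp hq => rw [mul_add, map_add, map_add, hp, hq, mul_add]

theorem momentEval_eq_zero_of_sub_dvd [DecidableEq σ] {i j : σ} {z : K}
    (hi : ∀ k, W i (k + 1) = z * W i k) (hj : ∀ k, W j (k + 1) = z * W j k)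
    {Q : MvPolynomial σ K} (hQ : X i - X j ∣ Q) : momentEval W Q = 0 := by
  obtain ⟨Q, rfl⟩ := hQ
  rw [sub_mul, map_sub, momentEval_X_mul W hi, momentEval_X_mul W hj, sub_self]

theorem momentEval_rename (W : τ → ℕ → K) (e : σ ≃ τ) (Q : MvPolynomial σ K) :
    momentEval W (rename e Q) = momentEval (fun a => W (e a)) Q := by
  induction Q using MvPolynomial.induction_on' with
  | monomial t c =>
    rw [rename_monomial, momentEval_monomial, momentEval_monomial,
      ← e.prod_comp fun b => W b (Finsupp.mapDomain e t b)]
    simp only [Finsupp.mapDomain_equiv_apply, Equiv.symm_apply_apply]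
  | add p q hp hq => rw [map_add, map_add, map_add, hp, hq]

theorem momentEval_add_smul [DecidableEq σ] (V : σ → ℕ → K) (r : K) (Q : MvPolynomial σ K) :
    momentEval (fun a => W a + r • V a) Q =
      ∑ E ∈ univ.powerset, r ^ #E * momentEval (fun a => if a ∈ E then V a else W a) Q := by
  simp only [momentEval_apply, mul_sum]
  rw [sum_comm]
  refine sum_congr rfl fun t _ => ?_
  simp only [Pi.add_apply, Pi.smul_apply, smul_eq_mul]
  rw [prod_congr rfl fun a _ => add_comm _ _, prod_add, mul_sum]
  refine sum_congr rfl fun E _ => ?_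
  simp only [ite_apply]
  rw [prod_ite, filter_mem_eq_inter, univ_inter, filter_not, filter_mem_eq_inter, univ_inter,
    prod_mul_distrib, prod_const]
  ring

theorem momentEval_ite_pow_eq_zero [DecidableEq σ] {T : MvPolynomial σ K}
    (hdvd : ∀ i j, i ≠ j → X i - X j ∣ T) (B : ℕ → K) (z : K) {E : Finset σ} (hE : 1 < #E) :
    momentEval (fun a => if a ∈ E then (fun k => z ^ k) else B) T = 0 := by
  obtain ⟨i, hi, j, hj, hij⟩ := one_lt_card.mp hE
  exact momentEval_eq_zero_of_sub_dvd _ (z := z) (by simp [hi, pow_succ'])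
    (by simp [hj, pow_succ']) (hdvd i j hij)

theorem MvPolynomial.IsSymmetric.momentEval_ite_singleton {n : ℕ}
    {T : MvPolynomial (Fin (n + 1)) K} (hT : T.IsSymmetric) (V B : ℕ → K) (α : Fin (n + 1)) :
    momentEval (fun a => if a ∈ ({α} : Finset _) then V else B) T =
      momentEval (Fin.cons V fun _ => B) T := by
  have hswap : (fun a => if Equiv.swap 0 α a ∈ ({α} : Finset _) then V else B) =
      Fin.cons V fun _ => B := by
    funext a
    refine Fin.cases ?_ (fun j => ?_) a
    · simp
    · simp [Equiv.swap_apply_eq_iff, Fin.succ_ne_zero]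
  conv_lhs => rw [← hT (Equiv.swap 0 α), momentEval_rename, hswap]

noncomputable def substFirst {n : ℕ} (u : K) :
    MvPolynomial (Fin (n + 1)) K →ₐ[K] MvPolynomial (Fin n) K :=
  aeval (Fin.cons (C u) X)

theorem eval_substFirst {n : ℕ} (u : K) (v : Fin n → K) (Q : MvPolynomial (Fin (n + 1)) K) :
    eval v (substFirst u Q) = eval (Fin.cons u v) Q := by
  rw [substFirst, ← coe_aeval_eq_eval, ← coe_aeval_eq_eval]
  refine (AlgHom.congr_fun (comp_aeval (f := (Fin.cons (C u) X : Fin (n + 1) → _)) (aeval v))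
    Q).trans (congrArg (aeval · Q) (funext fun i => ?_))
  refine Fin.cases ?_ (fun j => ?_) i <;> simp

theorem momentEval_cons_pow {n : ℕ} (W : Fin n → ℕ → K) (u : K)
    (Q : MvPolynomial (Fin (n + 1)) K) :
    momentEval (Fin.cons (fun k => u ^ k) W) Q = momentEval W (substFirst u Q) := by
  induction Q using MvPolynomial.induction_on' with
  | monomial t c =>
    have hmono : substFirst u (monomial t c) = monomial t.tail (c * u ^ t 0) := by
      rw [substFirst, aeval_monomial, Finsupp.prod_fintype _ _ fun _ => pow_zero _,
        Fin.prod_univ_succ, monomial_eq, Finsupp.prod_fintype _ _ fun _ => pow_zero _, C_mul,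
        algebraMap_eq, C_pow]
      simp only [Fin.cons_zero, Fin.cons_succ, Finsupp.tail_apply]
      ring
    rw [hmono, momentEval_monomial, momentEval_monomial, Fin.prod_univ_succ]
    simp only [Fin.cons_zero, Fin.cons_succ, Finsupp.tail_apply]
    ring
  | add p q hp hq => rw [map_add, map_add, map_add, hp, hq]

theorem momentEval_add_smul_pow_sub {n : ℕ} {T : MvPolynomial (Fin (n + 1)) K}
    (hT : T.IsSymmetric) (hdvd : ∀ i j, i ≠ j → X i - X j ∣ T) (B : ℕ → K) (z r : K) :
    momentEval (fun _ => B + r • fun k => z ^ k) T - momentEval (fun _ => B) T =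
      (n + 1) * r * momentEval (Fin.cons (fun k => z ^ k) fun _ => B) T := by
  classical
  set A₀ := momentEval (fun _ => B) T
  set A₁ := momentEval (Fin.cons (fun k => z ^ k) fun _ => B) T
  let ψ : ℕ → K := fun k => if k = 0 then A₀ else if k = 1 then A₁ else 0
  have hψ : ∀ E : Finset (Fin (n + 1)),
      momentEval (fun a => if a ∈ E then (fun k => z ^ k) else B) T = ψ #E := by
    intro E
    rcases Nat.lt_or_ge #E 2 with hE | hE
    · interval_cases hcard : #E
      · simp [card_eq_zero.mp hcard, ψ, A₀]
      · obtain ⟨α, rfl⟩ := card_eq_one.mp hcard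
        rw [hT.momentEval_ite_singleton]
        simp [ψ, A₁]
    · rw [momentEval_ite_pow_eq_zero hdvd B z hE]
      simp only [ψ]
      rw [if_neg (by omega), if_neg (by omega)]
  have hψ₂ : ∀ k, r ^ (k + 2) * ψ (k + 2) = 0 := fun k => by simp [ψ]
  rw [momentEval_add_smul, sum_congr rfl fun E _ => by rw [hψ E],
    sum_powerset_apply_card (fun k => r ^ k * ψ k), card_univ, Fintype.card_fin,
    sum_range_succ', sum_range_succ', sum_congr rfl fun k _ => by rw [hψ₂, smul_zero],
    sum_const_zero, Nat.choose_one_right, Nat.choose_zero_right, nsmul_eq_mul, one_smul]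
  simp only [ψ, if_pos]
  push_cast
  ring

end momentEval

theorem sphere_subset_closedBall_diff_ball {c : ℂ} {r s R : ℝ} (hr : r ≤ s) (hR : s ≤ R) :
    sphere c s ⊆ closedBall c R \ ball c r := fun w hw =>
  ⟨closedBall_subset_closedBall hR (sphere_subset_closedBall hw), by simp [mem_sphere.1 hw, hr]⟩

theorem circleIntegral_sub_inv_eq_zero_of_notMem_closedBall {c z : ℂ} {r : ℝ} (hr : 0 ≤ r)
    (hz : z ∉ closedBall c r) : (∮ w in C(c, r), (w - z)⁻¹) = 0 := by
  have hne : ∀ w ∈ closedBall c r, w - z ≠ 0 := fun w hw => sub_ne_zero.2 fun h => hz (h ▸ hw)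
  exact circleIntegral_eq_zero_of_differentiable_on_off_countable hr Set.countable_empty
    ((continuousOn_id.sub continuousOn_const).inv₀ hne)
    fun w hw => (differentiableAt_id.sub_const z).inv (hne w (ball_subset_closedBall hw.1))

theorem circleIntegral_sub_inv_mul_sub_of_annulus {c z : ℂ} {r R : ℝ} (h0 : 0 < r)
    (hle : r ≤ R) {F : ℂ → ℂ} (hF : DifferentiableOn ℂ F (closedBall c R \ ball c r))
    (hz : z ∈ ball c R \ closedBall c r) :
    (∮ w in C(c, R), (w - z)⁻¹ * F w) - (∮ w in C(c, r), (w - z)⁻¹ * F w) =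
      2 * Real.pi * I * F z := by
  set A := closedBall c R \ ball c r
  have hA : ∀ w ∈ ball c R \ closedBall c r, A ∈ nhds w := fun w hw =>
    Filter.mem_of_superset ((isOpen_ball.sdiff isClosed_closedBall).mem_nhds hw)
      (Set.sdiff_subset_sdiff ball_subset_closedBall ball_subset_closedBall)
  -- `G` has no pole at `z`, so it integrates alike over both circles; the rest is
  -- `F z / (w - z)`, which winds once around `z` on the outer circle and not on the inner one.
  set G := dslope F z
  have hGc : ContinuousOn G A :=
    (continuousOn_dslope (hA z hz)).2 ⟨hF.continuousOn, hF.differentiableAt (hA z hz)⟩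
  have hG : (∮ w in C(c, R), G w) = ∮ w in C(c, r), G w :=
    circleIntegral_eq_of_differentiable_on_annulus_off_countable h0 hle
      (Set.countable_singleton z) hGc
      fun w hw => (differentiableAt_dslope_of_ne hw.2).2 (hF.differentiableAt (hA w hw.1))
  have hsplit : ∀ ρ, 0 ≤ ρ → sphere c ρ ⊆ A → z ∉ sphere c ρ →
      (∮ w in C(c, ρ), (w - z)⁻¹ * F w) =
        (∮ w in C(c, ρ), G w) + F z * ∮ w in C(c, ρ), (w - z)⁻¹ := by
    intro ρ hρ hsphere hzρ
    have hne : ∀ w ∈ sphere c ρ, w - z ≠ 0 := fun w hw => sub_ne_zero.2 fun h => hzρ (h ▸ hw)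
    have hGi : CircleIntegrable G c ρ := (hGc.mono hsphere).circleIntegrable hρ
    have hinvi : CircleIntegrable (fun w => F z * (w - z)⁻¹) c ρ :=
      (continuousOn_const.mul ((continuousOn_id.sub continuousOn_const).inv₀ hne)).circleIntegrable
        hρ
    rw [← circleIntegral.integral_const_mul, ← circleIntegral.integral_add hGi hinvi]
    refine circleIntegral.integral_congr hρ fun w hw => ?_
    simp only [G, dslope_of_ne F (sub_ne_zero.1 (hne w hw)), slope, vsub_eq_sub, smul_eq_mul]
    ring
  rw [hsplit R (h0.le.trans hle) (sphere_subset_closedBall_diff_ball hle le_rfl)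
      (fun h => (mem_ball.1 hz.1).ne (mem_sphere.1 h)),
    hsplit r h0.le (sphere_subset_closedBall_diff_ball le_rfl hle)
      (fun h => hz.2 (sphere_subset_closedBall h)),
    hG, circleIntegral.integral_sub_inv_of_mem_ball hz.1,
    circleIntegral_sub_inv_eq_zero_of_notMem_closedBall h0.le hz.2]
  ring

noncomputable def circleMoment (c : ℂ) (ρ : ℝ) (h : ℂ → ℂ) (k : ℕ) : ℂ :=
  (2 * Real.pi * I)⁻¹ * ∮ w in C(c, ρ), w ^ k * h w

theorem circleIntegrable_pow_mul_div_sub {c z : ℂ} {r : ℝ} (hr : 0 ≤ r) {F : ℂ → ℂ}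
    (hF : ContinuousOn F (sphere c r)) (hz : z ∉ sphere c r) (k : ℕ) :
    CircleIntegrable (fun w => w ^ k * (F w / (w - z))) c r :=
  ((continuousOn_pow k).mul (hF.div (continuousOn_id.sub continuousOn_const)
    fun _ hw => sub_ne_zero.2 (ne_of_mem_of_not_mem hw hz))).circleIntegrable hr

theorem circleMoment_div_sub_of_annulus {c z : ℂ} {r R : ℝ} (h0 : 0 < r) (hle : r ≤ R)
    {F : ℂ → ℂ} (hF : DifferentiableOn ℂ F (closedBall c R \ ball c r))
    (hz : z ∈ ball c R \ closedBall c r) :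
    circleMoment c R (fun w => F w / (w - z)) =
      circleMoment c r (fun w => F w / (w - z)) + F z • fun k => z ^ k := by
  funext k
  have hcauchy := circleIntegral_sub_inv_mul_sub_of_annulus h0 hle (F := fun w => w ^ k * F w)
    ((differentiableOn_pow k).mul hF) hz
  have hintegrand : ∀ ρ : ℝ, (∮ w in C(c, ρ), w ^ k * (F w / (w - z))) =
      ∮ w in C(c, ρ), (w - z)⁻¹ * (w ^ k * F w) := fun ρ => by
    congr 1
    funext w
    ring
  simp only [circleMoment, Pi.add_apply, Pi.smul_apply, smul_eq_mul, hintegrand]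
  rw [sub_eq_iff_eq_add'.mp hcauchy]
  field_simp [two_pi_I_ne_zero]

theorem iterCircle_const_mul (c : ℂ) (ρ : ℝ) (a : ℂ) :
    ∀ (n : ℕ) (g : (Fin n → ℂ) → ℂ), iterCircle c ρ n (fun v => a * g v) = a * iterCircle c ρ n g
  | 0, _ => rfl
  | n + 1, g => by
    simp only [iterCircle, iterCircle_const_mul c ρ a n, circleIntegral.integral_const_mul]
    ring

theorem inv_two_pi_I_mul_circleIntegral_momentEval_cons {c : ℂ} {ρ : ℝ} {h : ℂ → ℂ}
    (hh : ∀ k : ℕ, CircleIntegrable (fun w => w ^ k * h w) c ρ) {n : ℕ} (W : Fin n → ℕ → ℂ)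
    (Q : MvPolynomial (Fin (n + 1)) ℂ) :
    (2 * Real.pi * I)⁻¹ * ∮ u in C(c, ρ), h u * momentEval (Fin.cons (fun k => u ^ k) W) Q =
      momentEval (Fin.cons (circleMoment c ρ h) W) Q := by
  have hterm : ∀ t : Fin (n + 1) →₀ ℕ, ∀ u : ℂ,
      h u * (coeff t Q * ∏ a, (Fin.cons (fun k => u ^ k) W : Fin (n + 1) → ℕ → ℂ) a (t a)) =
        (coeff t Q * ∏ i, W i (t i.succ)) * (u ^ t 0 * h u) := fun t u => by
    rw [Fin.prod_univ_succ]
    simp only [Fin.cons_zero, Fin.cons_succ]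
    ring
  have hint : ∀ t : Fin (n + 1) →₀ ℕ,
      CircleIntegrable (fun u => (coeff t Q * ∏ i, W i (t i.succ)) * (u ^ t 0 * h u)) c ρ :=
    fun t => (hh (t 0)).const_smul
  simp only [momentEval_apply, mul_sum, hterm]
  rw [circleIntegral.integral_fun_sum fun t _ => hint t, mul_sum]
  refine sum_congr rfl fun t _ => ?_
  rw [circleIntegral.integral_const_mul, Fin.prod_univ_succ]
  simp only [Fin.cons_zero, Fin.cons_succ, circleMoment]
  ring

theorem iterCircle_eval_mul_prod {c : ℂ} {ρ : ℝ} {h : ℂ → ℂ}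
    (hh : ∀ k : ℕ, CircleIntegrable (fun w => w ^ k * h w) c ρ) :
    ∀ (n : ℕ) (Q : MvPolynomial (Fin n) ℂ),
      iterCircle c ρ n (fun v => eval v Q * ∏ a, h (v a)) =
        momentEval (fun _ => circleMoment c ρ h) Q
  | 0, Q => by
    simp [iterCircle, momentEval_apply, eval_eq, prod_of_isEmpty]
  | n + 1, Q => by
    have hinner : ∀ u, iterCircle c ρ n
        (fun v => eval (Fin.cons u v) Q * ∏ a, h ((Fin.cons u v : Fin (n + 1) → ℂ) a)) =
          h u * momentEval (Fin.cons (fun k => u ^ k) fun _ => circleMoment c ρ h) Q := by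
      intro u
      rw [momentEval_cons_pow, ← iterCircle_eval_mul_prod hh n, ← iterCircle_const_mul]
      congr 1
      funext v
      rw [Fin.prod_univ_succ, ← eval_substFirst]
      simp only [Fin.cons_zero, Fin.cons_succ]
      ring
    simp only [iterCircle, hinner]
    rw [inv_two_pi_I_mul_circleIntegral_momentEval_cons hh]
    congr 2
    exact Fin.cons_self_tail (fun _ : Fin (n + 1) => circleMoment c ρ h)

theorem sq_prod_Ioi_sub_cons_mul_prod_div {n : ℕ} (F : ℂ → ℂ) (z : ℂ) (v : Fin n → ℂ) :
    (∏ i, ∏ j ∈ Ioi i,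
        ((Fin.cons z v : Fin (n + 1) → ℂ) i - (Fin.cons z v : Fin (n + 1) → ℂ) j)) ^ 2 *
      ∏ a, F (v a) / (v a - z) =
    (∏ a, F (v a) * (v a - z)) * (∏ i, ∏ j ∈ Ioi i, (v i - v j)) ^ 2 := by
  -- also at `w = z`, where both sides vanish since `F z / 0 = 0`
  have hfactor : ∀ w, (z - w) ^ 2 * (F w / (w - z)) = F w * (w - z) := fun w => by
    rcases eq_or_ne (w - z) 0 with hwz | hwz
    · simp [sub_eq_zero.1 hwz]
    · field_simp
      ring
  rw [prod_Ioi_sub_cons, mul_pow, ← prod_pow, mul_right_comm, ← prod_mul_distrib,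
    prod_congr rfl fun a _ => hfactor (v a)]

theorem stmt_16_general (m : ℕ) (R : ℂ → ℂ) (P : Finset ℂ) (c z : ℂ) (ρ ρ' : ℝ)
    (hρ : 0 < ρ) (hρρ' : ρ < ρ')
    (hP : ∀ p ∈ P, ‖p - c‖ < ρ)
    (hR : DifferentiableOn ℂ R ((P : Set ℂ))ᶜ)
    (hz1 : ρ < ‖z - c‖) (hz2 : ‖z - c‖ < ρ')
    (S : MvPolynomial (Fin (m + 1)) ℂ) (hS : S.IsSymmetric) :
    iterCircle c ρ' (m + 1)
        (fun u => (∏ a, R (u a) / (u a - z)) *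
          (∏ i : Fin (m + 1), ∏ j ∈ Finset.Ioi i, (u i - u j)) ^ 2 *
          MvPolynomial.eval u S)
      - iterCircle c ρ (m + 1)
          (fun u => (∏ a, R (u a) / (u a - z)) *
            (∏ i : Fin (m + 1), ∏ j ∈ Finset.Ioi i, (u i - u j)) ^ 2 *
            MvPolynomial.eval u S)
      = ((m : ℂ) + 1) * R z *
          iterCircle c ρ m
            (fun v => (∏ a, R (v a) * (v a - z)) *
              (∏ i : Fin m, ∏ j ∈ Finset.Ioi i, (v i - v j)) ^ 2 *
              MvPolynomial.eval (Fin.cons z v) S) := by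
  set h : ℂ → ℂ := fun w => R w / (w - z)
  set T : MvPolynomial (Fin (m + 1)) ℂ := (vandermonde X).det ^ 2 * S
  have hannulus : closedBall c ρ' \ ball c ρ ⊆ (P : Set ℂ)ᶜ := fun w hw hwP =>
    hw.2 (mem_ball_iff_norm.2 (hP w hwP))
  have hz : z ∈ ball c ρ' \ closedBall c ρ :=
    ⟨mem_ball_iff_norm.2 hz2, fun hmem => (mem_closedBall_iff_norm.1 hmem).not_gt hz1⟩
  have hint : ∀ r, ρ ≤ r → r ≤ ρ' → z ∉ sphere c r → ∀ k : ℕ,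
      CircleIntegrable (fun w => w ^ k * h w) c r := fun r hr hr' hzr =>
    circleIntegrable_pow_mul_div_sub (hρ.le.trans hr)
      (hR.continuousOn.mono ((sphere_subset_closedBall_diff_ball hr hr').trans hannulus)) hzr
  have hlhs : (fun u : Fin (m + 1) → ℂ => (∏ a, R (u a) / (u a - z)) *
      (∏ i : Fin (m + 1), ∏ j ∈ Ioi i, (u i - u j)) ^ 2 * eval u S) =
        fun u => eval u T * ∏ a, h (u a) := funext fun u => by
    rw [map_mul, eval_det_vandermonde_X_sq]
    ring
  have hrhs : (fun v : Fin m → ℂ => (∏ a, R (v a) * (v a - z)) *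
      (∏ i : Fin m, ∏ j ∈ Ioi i, (v i - v j)) ^ 2 * eval (Fin.cons z v) S) =
        fun v => eval v (substFirst z T) * ∏ a, h (v a) := funext fun v => by
    rw [eval_substFirst, map_mul, eval_det_vandermonde_X_sq]
    linear_combination -(eval (Fin.cons z v) S) * sq_prod_Ioi_sub_cons_mul_prod_div R z v
  have hintρ := hint ρ le_rfl hρρ'.le fun hmem => hz.2 (sphere_subset_closedBall hmem)
  have hintρ' := hint ρ' hρρ'.le le_rfl fun hmem => (mem_ball.1 hz.1).ne (mem_sphere.1 hmem)
  rw [hlhs, hrhs, iterCircle_eval_mul_prod hintρ', iterCircle_eval_mul_prod hintρ,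
    iterCircle_eval_mul_prod hintρ, ← momentEval_cons_pow,
    circleMoment_div_sub_of_annulus hρ hρρ'.le (hR.mono hannulus) hz]
  exact momentEval_add_smul_pow_sub ((isSymmetric_det_vandermonde_X_sq (m + 1)).mul hS)
    (fun i j hij => ((sub_dvd_det_vandermonde X hij).trans (dvd_pow_self _ two_ne_zero)).trans
      (dvd_mul_right _ S)) _ z (R z)

/-- contour-splitting, Lemma 8.2: let `R` be holomorphic away from a finite
set `P` of poles inside the circle `Γ = C(c,ρ)`, let `z` lie outside `Γ` (but inside the
deformed contour `Γ ∪ z = C(c,ρ')`) and not be a pole of `R`, and let `S` be a symmetric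
polynomial in `ℓ = m+1` variables.  Then
`(∏_{α=1}^ℓ ∮_{Γ∪z}) Δ_ℓ²S·∏ R(u_α)/(u_α-z) − (∏_{α=1}^ℓ ∮_Γ) Δ_ℓ²S·∏ R(u_α)/(u_α-z)
 = ℓ·R(z)·(∏_{α=1}^{ℓ-1} ∮_Γ) Δ_{ℓ-1}²·S(z,·)·∏ R(u_α)(u_α-z)`. -/
theorem stmt_16 (m : ℕ) (R : ℂ → ℂ) (P : Finset ℂ) (c z : ℂ) (ρ ρ' : ℝ)
    (hρ : 0 < ρ) (hρρ' : ρ < ρ')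
    (hP : ∀ p ∈ P, ‖p - c‖ < ρ)
    (hR : DifferentiableOn ℂ R ((P : Set ℂ))ᶜ)
    (hz1 : ρ < ‖z - c‖) (hz2 : ‖z - c‖ < ρ')
    (hzP : z ∉ P)
    (S : MvPolynomial (Fin (m + 1)) ℂ) (hS : S.IsSymmetric) :
    iterCircle c ρ' (m + 1)
        (fun u => (∏ a, R (u a) / (u a - z)) *
          (∏ i : Fin (m + 1), ∏ j ∈ Finset.Ioi i, (u i - u j)) ^ 2 *
          MvPolynomial.eval u S)
      - iterCircle c ρ (m + 1)
          (fun u => (∏ a, R (u a) / (u a - z)) *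
            (∏ i : Fin (m + 1), ∏ j ∈ Finset.Ioi i, (u i - u j)) ^ 2 *
            MvPolynomial.eval u S)
      = ((m : ℂ) + 1) * R z *
          iterCircle c ρ m
            (fun v => (∏ a, R (v a) * (v a - z)) *
              (∏ i : Fin m, ∏ j ∈ Finset.Ioi i, (v i - v j)) ^ 2 *
              MvPolynomial.eval (Fin.cons z v) S) :=
  stmt_16_general m R P c z ρ ρ' hρ hρρ' hP hR hz1 hz2 S hS
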